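/- For every i ≥ 1, the matrix product B_i := M_1 · M_2 ⋯ M_i ∈ Mat_r(F) is upper triangular with the following entries: B_i[ℓ,ℓ] = 1/𝕃_i^{d_ℓ} for 1 ≤ ℓ ≤ r; B_i[ℓ,j] = Σ_{0 ≤ i_ℓ < i_{ℓ+1} < ⋯ < i_{j−1} < i} (Q_ℓ^{(i_ℓ)} · Q_{ℓ+1}^{(i_{ℓ+1})} ⋯ Q_{j−1}^{(i_{j−1})}) / (𝕃_{i_ℓ}^{s_ℓ} · 𝕃_{i_{ℓ+1}}^{s_{ℓ+1}} ⋯ 𝕃_{i_{j−1}}^{s_{j−1}} · 𝕃_i^{d_j}) for 1 ≤ ℓ < j ≤ r; and B_i[ℓ,j] = 0 for ℓ > j. (This is the computation of the products Θ'^{*(1)} ⋯ Θ'^{*(i)} giving the coefficients of the logarithm series of the t-module attached to the star dual t-motive.) -/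

import Mathlib

open scoped BigOperators Classical

/-- The rational function field `F(θ,t)`, realized as the fraction field of
`F[θ][t] =` `Polynomial (Polynomial F)` (inner variable `θ`, outer variable `t`). -/
noncomputable abbrev Kf (F : Type*) [Field F] : Type _ :=
  FractionRing (Polynomial (Polynomial F))

/-- The element `θ` of `F(θ,t)`. -/
noncomputable def θK (F : Type*) [Field F] : Kf F :=
  algebraMap (Polynomial (Polynomial F)) (Kf F) (Polynomial.C Polynomial.X)

/-- The element `t` of `F(θ,t)`. -/
noncomputable def tK (F : Type*) [Field F] : Kf F :=
  algebraMap (Polynomial (Polynomial F)) (Kf F) Polynomial.X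

/-- Frobenius twisting `g ↦ g^{(i)}`: the `𝔽_q[t]`-algebra endomorphism of
`𝔽_q[θ][t]` sending `θ` to `θ^{q^i}` (here `q` is a parameter). -/
noncomputable def twist (F : Type*) [Field F] (q i : ℕ) :
    Polynomial (Polynomial F) →+* Polynomial (Polynomial F) :=
  Polynomial.mapRingHom (Polynomial.eval₂RingHom Polynomial.C (Polynomial.X ^ q ^ i))

/-- `LL F q i = 𝕃_i = (t−θ^q)(t−θ^{q²})⋯(t−θ^{q^i})`, with `𝕃_0 = 1`. -/
noncomputable def LL (F : Type*) [Field F] (q i : ℕ) : Kf F :=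
  ∏ k ∈ Finset.Icc 1 i, (tK F - θK F ^ q ^ k)

/-- `dsum s r j = d_j = s_j + s_{j+1} + ⋯ + s_r`. -/
def dsum (s : ℕ → ℕ) (r j : ℕ) : ℕ :=
  ∑ m ∈ Finset.Icc j r, s m

/-- The upper bidiagonal matrix `M_k ∈ Mat_r(F(θ,t))` with diagonal entries
`(M_k)[j,j] = 1/(t−θ^{q^k})^{d_j}`, superdiagonal entries
`(M_k)[j,j+1] = Q_j^{(k−1)}/(t−θ^{q^k})^{d_{j+1}}`, and all other entries `0`.
Rows/columns are indexed by `Fin r`, index `a` corresponding to `1`-based index `a+1`. -/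
noncomputable def Mmat (F : Type*) [Field F] (q r : ℕ) (s : ℕ → ℕ)
    (Q : ℕ → Polynomial (Polynomial F)) (k : ℕ) : Matrix (Fin r) (Fin r) (Kf F) :=
  Matrix.of fun a b =>
    if (a : ℕ) = b then ((tK F - θK F ^ q ^ k) ^ dsum s r ((a : ℕ) + 1))⁻¹
    else if (b : ℕ) = (a : ℕ) + 1 then
      algebraMap (Polynomial (Polynomial F)) (Kf F) (twist F q (k - 1) (Q ((a : ℕ) + 1))) *
        ((tK F - θK F ^ q ^ k) ^ dsum s r ((b : ℕ) + 1))⁻¹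
    else 0

/-!
Induct on `i`, using `B_{i+1} = B_i M_{i+1}`. Since `M_{i+1}` is upper bidiagonal, the entry
`(ℓ, j)` of `B_i M_{i+1}` only involves the entries `(ℓ, j)` and `(ℓ, j - 1)` of `B_i`. On the
side of the closed formula this is the split of the chains `i_ℓ < ⋯ < i_{j-1} < i + 1` according
to whether the last index `i_{j-1}` is `< i` or `= i`; the factor `(t - θ^{q^{i+1}})^{-d_j}`
turns `𝕃_i^{-d_j}` into `𝕃_{i+1}^{-d_j}`, and `d_{j-1} = s_{j-1} + d_j` accounts for the new
factor `Q_{j-1}^{(i)} / 𝕃_i^{s_{j-1}}`.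
-/

open Finset

theorem Fin.strictMono_snoc_iff {α : Type*} [Preorder α] {n : ℕ} {g : Fin n → α} {x : α} :
    StrictMono (Fin.snoc g x : Fin (n + 1) → α) ↔ StrictMono g ∧ ∀ m, g m < x := by
  refine ⟨fun h => ⟨fun a b hab => ?_, fun m => ?_⟩, fun ⟨hg, hx⟩ => ?_⟩
  · simpa using h (Fin.castSucc_lt_castSucc_iff.2 hab)
  · simpa using h (Fin.castSucc_lt_last m)
  · intro a b hab
    induction b using Fin.lastCases with
    | last =>
      obtain ⟨a, rfl⟩ := Fin.exists_castSucc_eq.2 hab.ne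
      simpa using hx a
    | cast b =>
      obtain ⟨a, rfl⟩ := Fin.exists_castSucc_eq.2 (hab.trans (Fin.castSucc_lt_last b)).ne
      simpa using hg (Fin.castSucc_lt_castSucc_iff.1 hab)

theorem Fin.strictMono_castSucc_comp_iff {n i : ℕ} {g : Fin n → Fin i} :
    StrictMono (Fin.castSucc ∘ g) ↔ StrictMono g :=
  Iff.rfl

section ChainSum

variable {R : Type*} [CommSemiring R]

def chainSum (f : ℕ → ℕ → R) (n i : ℕ) : R :=
  ∑ g : Fin n → Fin i, if StrictMono g then ∏ m : Fin n, f (g m) m else 0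

variable (f : ℕ → ℕ → R)

theorem chainSum_zero_left (i : ℕ) : chainSum f 0 i = 1 := by
  simp [chainSum, Subsingleton.strictMono]

theorem chainSum_succ_zero (n : ℕ) : chainSum f (n + 1) 0 = 0 := by
  simp [chainSum]

theorem chainSum_eq_sum_last_ne (n i : ℕ) :
    chainSum f (n + 1) i = ∑ g : Fin (n + 1) → Fin (i + 1),
      if StrictMono g ∧ g (Fin.last n) ≠ Fin.last i then ∏ m : Fin (n + 1), f (g m) m else 0 := by
  refine Fintype.sum_of_injective (Fin.castSucc ∘ ·) (Fin.castSucc_injective _).comp_left _ _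
    (fun g hg => ?_) (fun g => ?_)
  · refine if_neg fun ⟨hmono, hlast⟩ => hg ⟨fun m => (g m).castPred ?_, ?_⟩
    · exact Fin.ne_last_of_lt ((hmono.monotone (Fin.le_last m)).trans_lt
        (Fin.lt_last_iff_ne_last.2 hlast))
    · ext m
      simp
  · simp [Fin.castSucc_ne_last, Fin.strictMono_castSucc_comp_iff]

theorem chainSum_mul_eq_sum_last_eq (n i : ℕ) :
    chainSum f n i * f i n = ∑ g : Fin (n + 1) → Fin (i + 1),
      if StrictMono g ∧ g (Fin.last n) = Fin.last i then ∏ m : Fin (n + 1), f (g m) m else 0 := by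
  rw [chainSum, sum_mul]
  refine Fintype.sum_of_injective (fun g => Fin.snoc (Fin.castSucc ∘ g) (Fin.last i))
    (fun g h hgh => (Fin.castSucc_injective _).comp_left (by simpa using congrArg Fin.init hgh))
    _ _ (fun g hg => ?_) (fun g => ?_)
  · refine if_neg fun ⟨hmono, hlast⟩ => hg ⟨fun m => (g m.castSucc).castPred ?_, ?_⟩
    · exact Fin.ne_last_of_lt (hlast ▸ hmono (Fin.castSucc_lt_last m))
    · conv_rhs => rw [← Fin.snoc_init_self g, hlast]
      rfl
  · simp [Fin.strictMono_snoc_iff, Fin.strictMono_castSucc_comp_iff, Fin.castSucc_lt_last,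
      Fin.prod_univ_castSucc, ite_mul]

theorem chainSum_succ_succ (n i : ℕ) :
    chainSum f (n + 1) (i + 1) = chainSum f (n + 1) i + chainSum f n i * f i n := by
  rw [chainSum_eq_sum_last_ne f n i, chainSum_mul_eq_sum_last_eq, ← sum_add_distrib, chainSum]
  refine sum_congr rfl fun g _ => ?_
  by_cases h : g (Fin.last n) = Fin.last i <;> simp [h]

end ChainSum

section Product

variable {F : Type*} [Field F] {q r : ℕ} {s : ℕ → ℕ} {Q : ℕ → Polynomial (Polynomial F)}

theorem LL_zero : LL F q 0 = 1 := by
  simp [LL]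

theorem LL_succ (i : ℕ) : LL F q (i + 1) = LL F q i * (tK F - θK F ^ q ^ (i + 1)) :=
  prod_Icc_succ_top (Nat.le_add_left 1 i) _

theorem dsum_eq_add {j : ℕ} (hj : j ≤ r) : dsum s r j = s j + dsum s r (j + 1) := by
  rw [dsum, ← Ioc_insert_left hj, sum_insert (by simp), ← Icc_add_one_left_eq_Ioc, dsum]

/-- `Q_{ℓ+m}^{(k)} / 𝕃_k^{s_{ℓ+m}}` for the row `ℓ = a + 1` (rows of `Fin r` are `0`-based). -/
noncomputable def chainFactor (q : ℕ) (s : ℕ → ℕ) (Q : ℕ → Polynomial (Polynomial F))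
    (a k m : ℕ) : Kf F :=
  algebraMap (Polynomial (Polynomial F)) (Kf F) (twist F q k (Q (a + 1 + m))) /
    LL F q k ^ s (a + 1 + m)

/-- The closed form of `B_i`; on the diagonal the chain sum is empty and equals `1`. -/
noncomputable def Bmat (q r : ℕ) (s : ℕ → ℕ) (Q : ℕ → Polynomial (Polynomial F)) (i : ℕ) :
    Matrix (Fin r) (Fin r) (Kf F) :=
  Matrix.of fun a b => if (a : ℕ) ≤ b then
    chainSum (chainFactor q s Q a) (b - a) i / LL F q i ^ dsum s r (b + 1) else 0

theorem Bmat_apply_of_le {i : ℕ} {a b : Fin r} (h : (a : ℕ) ≤ b) :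
    Bmat q r s Q i a b = chainSum (chainFactor q s Q a) (b - a) i / LL F q i ^ dsum s r (b + 1) :=
  if_pos h

theorem Bmat_apply_of_lt {i : ℕ} {a b : Fin r} (h : (b : ℕ) < a) : Bmat q r s Q i a b = 0 :=
  if_neg h.not_ge

theorem Mmat_apply_self (k : ℕ) (a : Fin r) :
    Mmat F q r s Q k a a = ((tK F - θK F ^ q ^ k) ^ dsum s r (a + 1))⁻¹ :=
  if_pos rfl

theorem Mmat_apply_of_eq_succ {k : ℕ} {a b : Fin r} (h : (b : ℕ) = a + 1) :
    Mmat F q r s Q k a b = algebraMap (Polynomial (Polynomial F)) (Kf F)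
      (twist F q (k - 1) (Q (a + 1))) * ((tK F - θK F ^ q ^ k) ^ dsum s r (b + 1))⁻¹ := by
  simp [Mmat, h]

theorem Mmat_apply_eq_zero {k : ℕ} {a b : Fin r} (h₁ : (a : ℕ) ≠ b) (h₂ : (b : ℕ) ≠ a + 1) :
    Mmat F q r s Q k a b = 0 := by
  simp [Mmat, h₁, h₂]

theorem Bmat_apply_mul_Mmat_apply_eq_zero {i k : ℕ} {a c b : Fin r}
    (h : (a : ℕ) ≤ c → (c : ℕ) ≠ b ∧ (b : ℕ) ≠ c + 1) :
    Bmat q r s Q i a c * Mmat F q r s Q k c b = 0 := by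
  rcases lt_or_ge (c : ℕ) a with hca | hac
  · rw [Bmat_apply_of_lt hca, zero_mul]
  · rw [Mmat_apply_eq_zero (h hac).1 (h hac).2, mul_zero]

theorem Bmat_zero : Bmat q r s Q 0 = 1 := by
  ext a b
  rcases lt_trichotomy (a : ℕ) b with hab | hab | hab
  · obtain ⟨n, hn⟩ := Nat.exists_eq_add_of_lt hab
    rw [Bmat_apply_of_le hab.le, Matrix.one_apply_ne (Fin.ne_of_lt hab), hn,
      show a + n + 1 - a = n + 1 by omega, chainSum_succ_zero, zero_div]
  · rw [Bmat_apply_of_le hab.le, Fin.ext hab, Matrix.one_apply_eq, Nat.sub_self,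
      chainSum_zero_left, LL_zero, one_pow, div_one]
  · rw [Bmat_apply_of_lt hab, Matrix.one_apply_ne (Fin.ne_of_gt hab)]

theorem Bmat_mul_Mmat (i : ℕ) :
    Bmat q r s Q i * Mmat F q r s Q (i + 1) = Bmat q r s Q (i + 1) := by
  ext a b
  rw [Matrix.mul_apply]
  rcases lt_trichotomy (a : ℕ) b with hab | hab | hab
  · obtain ⟨n, hn⟩ := Nat.exists_eq_add_of_lt hab
    let c : Fin r := ⟨a + n, by omega⟩
    have hc : (c : ℕ) = a + n := rfl
    have hb : (b : ℕ) = c + 1 := by omega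
    rw [Fintype.sum_eq_add c b (Fin.ne_of_lt (by omega))
        fun x hx => Bmat_apply_mul_Mmat_apply_eq_zero fun _ => ⟨by omega, by omega⟩,
      Bmat_apply_of_le (by omega : (a : ℕ) ≤ c), Bmat_apply_of_le hab.le, Bmat_apply_of_le hab.le,
      Mmat_apply_of_eq_succ hb, Mmat_apply_self, show (b : ℕ) - a = n + 1 by omega,
      show (c : ℕ) - a = n by omega, chainSum_succ_succ, chainFactor,
      show a + 1 + n = (c : ℕ) + 1 by omega, Nat.add_sub_cancel, hb,
      dsum_eq_add (by omega : (c : ℕ) + 1 ≤ r), LL_succ, pow_add, mul_pow]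
    ring
  · obtain rfl := Fin.ext hab
    rw [Fintype.sum_eq_single a
        fun x hx => Bmat_apply_mul_Mmat_apply_eq_zero fun _ => ⟨by omega, by omega⟩,
      Bmat_apply_of_le le_rfl, Bmat_apply_of_le le_rfl, Mmat_apply_self, Nat.sub_self,
      chainSum_zero_left, chainSum_zero_left, LL_succ, mul_pow]
    ring
  · rw [Bmat_apply_of_lt hab]
    exact Fintype.sum_eq_zero _
      fun x => Bmat_apply_mul_Mmat_apply_eq_zero fun _ => ⟨by omega, by omega⟩

theorem prod_Mmat_eq_Bmat (i : ℕ) :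
    ((List.range i).map fun k => Mmat F q r s Q (k + 1)).prod = Bmat q r s Q i := by
  induction i with
  | zero => exact Bmat_zero.symm
  | succ i ih => rw [List.range_succ, List.map_append, List.prod_append, ih, List.map_singleton,
      List.prod_singleton, Bmat_mul_Mmat]

end Product

theorem stmt9_general (F : Type*) [Field F] [Fintype F] (r : ℕ)
    (s : ℕ → ℕ)
    (Q : ℕ → Polynomial (Polynomial F)) (i : ℕ) :
    ((List.range i).map fun k => Mmat F (Fintype.card F) r s Q (k + 1)).prod =
      Matrix.of fun a b : Fin r =>
        if (a : ℕ) = b then (LL F (Fintype.card F) i ^ dsum s r ((a : ℕ) + 1))⁻¹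
        else if (a : ℕ) < b then
          ∑ g : Fin ((b : ℕ) - a) → Fin i,
            if StrictMono g then
              (∏ m : Fin ((b : ℕ) - a),
                algebraMap (Polynomial (Polynomial F)) (Kf F)
                    (twist F (Fintype.card F) (g m : ℕ) (Q ((a : ℕ) + 1 + m))) /
                  LL F (Fintype.card F) (g m : ℕ) ^ s ((a : ℕ) + 1 + m)) /
                LL F (Fintype.card F) i ^ dsum s r ((b : ℕ) + 1)
            else 0
        else 0 := by
  rw [prod_Mmat_eq_Bmat]
  ext a b
  rw [Matrix.of_apply]
  rcases lt_trichotomy (a : ℕ) b with hab | hab | hab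
  · rw [if_neg hab.ne, if_pos hab, Bmat_apply_of_le hab.le, chainSum, sum_div]
    simp only [chainFactor, ite_div, zero_div]
  · rw [if_pos hab, Bmat_apply_of_le hab.le, hab, Nat.sub_self, chainSum_zero_left, one_div]
  · rw [if_neg hab.ne', if_neg hab.not_gt, Bmat_apply_of_lt hab]

/-- For every `i ≥ 1` the product `B_i = M_1·M_2⋯M_i` is upper triangular with
`B_i[ℓ,ℓ] = 1/𝕃_i^{d_ℓ}`,
`B_i[ℓ,j] = Σ_{0 ≤ i_ℓ < ⋯ < i_{j−1} < i} (Q_ℓ^{(i_ℓ)}⋯Q_{j−1}^{(i_{j−1})}) /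
(𝕃_{i_ℓ}^{s_ℓ}⋯𝕃_{i_{j−1}}^{s_{j−1}} · 𝕃_i^{d_j})` for `ℓ < j`, and `B_i[ℓ,j] = 0`
for `ℓ > j`.  The inner sum is indexed by strictly monotone tuples
`g : Fin (j−ℓ) → Fin i` recording `(i_ℓ,…,i_{j−1})`. -/
theorem stmt9 (F : Type*) [Field F] [Fintype F] (r : ℕ) (hr : 1 ≤ r)
    (s : ℕ → ℕ) (hs : ∀ m, 1 ≤ m → m ≤ r → 1 ≤ s m)
    (Q : ℕ → Polynomial (Polynomial F)) (i : ℕ) (hi : 1 ≤ i) :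
    ((List.range i).map fun k => Mmat F (Fintype.card F) r s Q (k + 1)).prod =
      Matrix.of fun a b : Fin r =>
        if (a : ℕ) = b then (LL F (Fintype.card F) i ^ dsum s r ((a : ℕ) + 1))⁻¹
        else if (a : ℕ) < b then
          ∑ g : Fin ((b : ℕ) - a) → Fin i,
            if StrictMono g then
              (∏ m : Fin ((b : ℕ) - a),
                algebraMap (Polynomial (Polynomial F)) (Kf F)
                    (twist F (Fintype.card F) (g m : ℕ) (Q ((a : ℕ) + 1 + m))) /
                  LL F (Fintype.card F) (g m : ℕ) ^ s ((a : ℕ) + 1 + m)) /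
                LL F (Fintype.card F) i ^ dsum s r ((b : ℕ) + 1)
            else 0
        else 0 :=
  stmt9_general F r s Q i
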